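/- Let G be a finite abelian group, R, S ⊆ G with R = R⁻¹ and 1 ∉ R, and Γ = SC(G,R,R,S). Then Γ is periodic if and only if Γ is integral; moreover, in that case the minimum period of the vertices is 2π/M, where M = gcd{λ − λ₁⁺ : λ an eigenvalue of Γ different from λ₁⁺} and λ₁⁺ = |R| + |S| is the largest eigenvalue of Γ. -/

import Mathlib

open scoped Classical Pointwise
open Complex Finset Matrix

noncomputable section

/-- Adjacency matrix of the semi-Cayley graph `SC(G,R,L,S)` on vertex set `G × Fin 2`. -/
def scAdj {G : Type*} [Group G] (R L S : Finset G) :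
    Matrix (G × Fin 2) (G × Fin 2) ℂ := fun u v =>
  if u.2 = 0 ∧ v.2 = 0 ∧ v.1 * u.1⁻¹ ∈ R then 1
  else if u.2 = 1 ∧ v.2 = 1 ∧ v.1 * u.1⁻¹ ∈ L then 1
  else if u.2 = 0 ∧ v.2 = 1 ∧ v.1 * u.1⁻¹ ∈ S then 1
  else if u.2 = 1 ∧ v.2 = 0 ∧ u.1 * v.1⁻¹ ∈ S then 1
  else 0

/-- Adjacency matrix of the Cayley graph `Cay(G,T)`. -/
def cayAdj {G : Type*} [Group G] (T : Finset G) : Matrix G G ℂ := fun u v =>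
  if v * u⁻¹ ∈ T then 1 else 0

/-- Transfer matrix `H(t) = exp(-i t A)`. -/
def transfer {V : Type*} [Fintype V] [DecidableEq V]
    (A : Matrix V V ℂ) (t : ℝ) : Matrix V V ℂ :=
  NormedSpace.exp ((-(Complex.I * (t : ℂ))) • A)

/-- Perfect state transfer from `u` to `v` at time `t`. -/
def pst {V : Type*} [Fintype V] [DecidableEq V]
    (A : Matrix V V ℂ) (u v : V) (t : ℝ) : Prop :=
  ‖transfer A t u v‖ = 1

/-- A matrix is integral if all its eigenvalues are integers. -/
def isIntegral {V : Type*} [Fintype V] [DecidableEq V] (A : Matrix V V ℂ) : Prop :=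
  ∀ μ ∈ spectrum ℂ A, ∃ k : ℤ, μ = (k : ℂ)

/-- The character sum `χ(X) = ∑_{x ∈ X} χ(x)`. -/
def charSum {G : Type*} [Group G] (χ : G →* ℂ) (X : Finset G) : ℂ := ∑ x ∈ X, χ x

/-- The eigenvalue `λ_χ⁺` of `SC(G,R,L,S)`, with the convention `λ_χ⁺ = χ(R)` when `χ(S) = 0`. -/
def lamP {G : Type*} [Group G] (R L S : Finset G) (χ : G →* ℂ) : ℝ :=
  if charSum χ S = 0 then (charSum χ R).re
  else ((charSum χ R).re + (charSum χ L).re +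
    Real.sqrt (((charSum χ R).re - (charSum χ L).re) ^ 2 +
      4 * ‖charSum χ S‖ ^ 2)) / 2

/-- The eigenvalue `λ_χ⁻` of `SC(G,R,L,S)`, with the convention `λ_χ⁻ = χ(L)` when `χ(S) = 0`. -/
def lamM {G : Type*} [Group G] (R L S : Finset G) (χ : G →* ℂ) : ℝ :=
  if charSum χ S = 0 then (charSum χ L).re
  else ((charSum χ R).re + (charSum χ L).re -
    Real.sqrt (((charSum χ R).re - (charSum χ L).re) ^ 2 +
      4 * ‖charSum χ S‖ ^ 2)) / 2

/-- The 2-adic valuation `ν₂` with `ν₂(0) = ∞`, extended (junk value `0`) to the reals. -/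
def nu2 (x : ℝ) : WithTop ℤ :=
  if x = 0 then ⊤
  else if hq : ∃ q : ℚ, (q : ℝ) = x then ((padicValRat 2 hq.choose : ℤ) : WithTop ℤ)
  else 0


/-!
Write `H(t) = U diag(e^{-itλⱼ}) U*` with `U` unitary. A unitary matrix with unimodular diagonal
is diagonal, and the all-ones vector is an eigenvector for `λ₁ = |R| + |S|`, so the graph has
period `t` exactly when `H(t) = e^{-itλ₁} I`, i.e. when `t (λ - λ₁) ∈ 2πℤ` for every eigenvalue
`λ`. In that case the differences `λ - λ₁` are integer multiples of `2π / t` whose sum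
`tr A - 2|G| λ₁ = -2|G| λ₁` is a nonzero integer (unless `R = S = ∅`, where `A = 0`), so every
eigenvalue is rational; being an algebraic integer, it is an integer. For an integral graph,
Bézout's identity shows that the least such `t` is `2π / gcd (λ - λ₁)`.
-/

open Real

def HasPeriod {V : Type*} [Fintype V] [DecidableEq V] (A : Matrix V V ℂ) (t : ℝ) : Prop :=
  ∀ v, ‖transfer A t v v‖ = 1

theorem norm_exp_neg_I_mul (t x : ℝ) : ‖cexp (-(I * t) * x)‖ = 1 := by
  rw [Complex.norm_exp]
  simp

theorem exp_neg_I_mul_eq_iff (t a b : ℝ) :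
    cexp (-(I * t) * a) = cexp (-(I * t) * b) ↔ ∃ k : ℤ, t * (a - b) = 2 * π * k := by
  rw [Complex.exp_eq_exp_iff_exists_int]
  constructor
  · rintro ⟨k, hk⟩
    have him : -(t * a) = -(t * b) + k * (2 * π) := by simpa using congrArg Complex.im hk
    exact ⟨-k, by push_cast; linarith⟩
  · rintro ⟨k, hk⟩
    have him : -(t * a) = -(t * b) + (-k : ℤ) * (2 * π) := by push_cast; linarith
    exact ⟨-k, Complex.ext (by simp) (by simpa using him)⟩

theorem exists_rat_eq_of_forall_eq_mul_int {ι : Type*} [Fintype ι] {x : ι → ℝ} {c : ℝ}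
    (hx : ∀ j, ∃ k : ℤ, x j = c * k) {T : ℚ} (hT : ∑ j, x j = T) (hT0 : T ≠ 0) (j : ι) :
    ∃ q : ℚ, x j = q := by
  choose k hk using hx
  have hsum : (T : ℝ) = c * (∑ i, k i : ℤ) := by
    rw [← hT, Int.cast_sum, Finset.mul_sum]
    exact Finset.sum_congr rfl fun i _ => hk i
  have hK : ((∑ i, k i : ℤ) : ℝ) ≠ 0 := by
    rintro hK
    rw [hK, mul_zero] at hsum
    exact hT0 (by exact_mod_cast hsum)
  refine ⟨T * k j / (∑ i, k i : ℤ), ?_⟩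
  rw [hk j, Rat.cast_div, Rat.cast_mul, Rat.cast_intCast, Rat.cast_intCast, hsum]
  field_simp

theorem exists_int_eq_of_isIntegral_ratCast {q : ℚ} (h : IsIntegral ℤ (q : ℂ)) :
    ∃ m : ℤ, q = m := by
  have hq : IsIntegral ℤ q := (isIntegral_algebraMap_iff (algebraMap ℚ ℂ).injective).mp h
  obtain ⟨m, hm⟩ := IsIntegrallyClosed.isIntegral_iff.mp hq
  exact ⟨m, hm.symm⟩

theorem Matrix.isIntegral_of_mem_spectrum {n : Type*} [Fintype n] [DecidableEq n]
    {A : Matrix n n ℂ} (hZ : ∀ i j, ∃ k : ℤ, A i j = k) {μ : ℂ} (hμ : μ ∈ spectrum ℂ A) :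
    IsIntegral ℤ μ := by
  choose A₀ hA₀ using hZ
  have hA : A = (Matrix.of A₀).map (algebraMap ℤ ℂ) := by ext i j; exact hA₀ i j
  refine ⟨(Matrix.of A₀).charpoly, charpoly_monic _, ?_⟩
  rw [← Polynomial.eval_map, ← charpoly_map, ← hA]
  exact (mem_spectrum_iff_isRoot_charpoly).mp hμ

theorem isLeast_two_pi_div {ι : Type*} [Fintype ι] (m : ι → ℤ) {M : ℤ}
    (hM : IsGreatest {d : ℤ | 0 < d ∧ ∀ j, d ∣ m j} M) :
    IsLeast {t : ℝ | 0 < t ∧ ∀ j, ∃ k : ℤ, t * m j = 2 * π * k} (2 * π / M) := by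
  obtain ⟨⟨hM0, hMm⟩, hMmax⟩ := hM
  have hM0' : (0 : ℝ) < M := by exact_mod_cast hM0
  refine ⟨⟨by positivity, fun j => ?_⟩, ?_⟩
  · obtain ⟨c, hc⟩ := hMm j
    exact ⟨c, by rw [hc]; push_cast; field_simp⟩
  rintro t ⟨ht, hk⟩
  choose k hk using hk
  set g := Finset.univ.gcd m
  have hg0 : 0 < g := by
    refine lt_of_le_of_ne (Int.nonneg_of_normalize_eq_self Finset.normalize_gcd) fun hg => ?_
    -- if every `m j` vanished, every `d > 0` would qualify and there would be no greatest one
    have hm0 : ∀ j, m j = 0 := fun j => Finset.gcd_eq_zero_iff.mp hg.symm j (Finset.mem_univ j)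
    have : M + 1 ≤ M := hMmax ⟨by omega, fun j => by simp [hm0 j]⟩
    omega
  have hgM : (g : ℝ) ≤ M := by
    exact_mod_cast hMmax ⟨hg0, fun j => Finset.gcd_dvd (Finset.mem_univ j)⟩
  obtain ⟨a, ha⟩ : ∃ a : ι → ℤ, g = ∑ j, m j * a j := Finset.gcd_eq_sum_mul _ _
  have htg : t * g = 2 * π * (∑ j, k j * a j : ℤ) := by
    rw [ha]
    push_cast
    simp only [Finset.mul_sum, ← mul_assoc, hk]
  have hK : (1 : ℝ) ≤ (∑ j, k j * a j : ℤ) := by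
    have : (0 : ℝ) < (∑ j, k j * a j : ℤ) :=
      pos_of_mul_pos_right (htg ▸ by positivity) two_pi_pos.le
    exact_mod_cast this
  calc 2 * π / M ≤ 2 * π / g := by gcongr
    _ ≤ t := by
      rw [div_le_iff₀ (by exact_mod_cast hg0), htg]
      exact le_mul_of_one_le_right two_pi_pos.le hK

namespace Matrix

variable {n : Type*} [Fintype n] [DecidableEq n]

theorem apply_eq_zero_of_mul_star_eq_one {U : Matrix n n ℂ} (hU : U * star U = 1) {v : n}
    (hv : ‖U v v‖ = 1) {u : n} (huv : u ≠ v) : U v u = 0 := by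
  have hrow : ∑ x, ‖U v x‖ ^ 2 = 1 := by
    have := congrFun (congrFun hU v) v
    simp only [mul_apply, one_apply_eq, star_apply, RCLike.star_def, Complex.mul_conj,
      Complex.normSq_eq_norm_sq] at this
    exact_mod_cast this
  rw [← Finset.add_sum_erase _ _ (Finset.mem_univ v), hv, one_pow, add_eq_left,
    Finset.sum_eq_zero_iff_of_nonneg (fun _ _ => by positivity)] at hrow
  simpa using hrow u (by simpa using huv)

end Matrix

namespace Matrix.IsHermitian

variable {n : Type*} [Fintype n] [DecidableEq n] {A : Matrix n n ℂ}

theorem transfer_eq (hA : A.IsHermitian) (t : ℝ) :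
    transfer A t = (hA.eigenvectorUnitary : Matrix n n ℂ) *
      diagonal (fun j => cexp (-(I * t) * hA.eigenvalues j)) *
      star (hA.eigenvectorUnitary : Matrix n n ℂ) := by
  set U : Matrix n n ℂ := (hA.eigenvectorUnitary : Matrix n n ℂ)
  have hinv : U⁻¹ = star U := inv_eq_left_inv (Unitary.coe_star_mul_self _)
  have hexp : NormedSpace.exp ((-(I * t)) • diagonal (RCLike.ofReal ∘ hA.eigenvalues)) =
      diagonal (fun j => cexp (-(I * t) * hA.eigenvalues j)) := by
    rw [← diagonal_smul, exp_diagonal]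
    congr 1
    ext j
    simp [Complex.exp_eq_exp_ℂ]
  rw [transfer]
  conv_lhs => rw [hA.spectral_theorem]
  rw [Unitary.conjStarAlgAut_apply, ← hinv, ← Matrix.smul_mul, ← Matrix.mul_smul,
    exp_conj _ _ Unitary.isUnit_coe, hexp]

theorem transfer_mul_star (hA : A.IsHermitian) (t : ℝ) :
    transfer A t * star (transfer A t) = 1 := by
  set U : Matrix n n ℂ := (hA.eigenvectorUnitary : Matrix n n ℂ)
  set D := diagonal (fun j => cexp (-(I * t) * hA.eigenvalues j))
  have hD : D * star D = 1 := by
    rw [star_eq_conjTranspose, diagonal_conjTranspose, diagonal_mul_diagonal, ← diagonal_one]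
    refine congrArg diagonal (funext fun j => ?_)
    rw [Pi.star_apply, RCLike.star_def, Complex.mul_conj, Complex.normSq_eq_norm_sq,
      norm_exp_neg_I_mul, one_pow, Complex.ofReal_one]
  calc transfer A t * star (transfer A t) = U * (D * (star U * U) * star D) * star U := by
        simp only [transfer_eq hA, star_mul, star_star, mul_assoc]; rfl
    _ = 1 := by
        rw [Unitary.star_mul_self_of_mem (SetLike.coe_mem _), mul_one, hD, mul_one,
          Unitary.mul_star_self_of_mem (SetLike.coe_mem _)]

theorem transfer_mulVec_of_mulVec_eq (hA : A.IsHermitian) (t : ℝ) {w : n → ℂ} {l : ℝ}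
    (hw : A *ᵥ w = (l : ℂ) • w) : transfer A t *ᵥ w = cexp (-(I * t) * l) • w := by
  set U : Matrix n n ℂ := (hA.eigenvectorUnitary : Matrix n n ℂ)
  have hUU : U * star U = 1 := Unitary.mul_star_self_of_mem (SetLike.coe_mem _)
  set c := star U *ᵥ w
  have hc : ∀ j, c j ≠ 0 → hA.eigenvalues j = l := by
    have : diagonal (RCLike.ofReal ∘ hA.eigenvalues) *ᵥ c = (l : ℂ) • c := by
      rw [← hA.conjStarAlgAut_star_eigenvectorUnitary, Unitary.conjStarAlgAut_apply]
      simp only [Unitary.coe_star, star_star, c, mulVec_mulVec]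
      rw [mul_assoc _ U, hUU, mul_one, ← mulVec_mulVec, hw, mulVec_smul]
    intro j hj
    have := congrFun this j
    simp only [mulVec_diagonal, Function.comp_apply, Pi.smul_apply, smul_eq_mul] at this
    simpa using mul_right_cancel₀ hj this
  have hdiag : diagonal (fun j => cexp (-(I * t) * hA.eigenvalues j)) *ᵥ c =
      cexp (-(I * t) * l) • c := by
    ext j
    rw [mulVec_diagonal, Pi.smul_apply, smul_eq_mul]
    by_cases hj : c j = 0
    · simp [hj]
    · rw [hc j hj]
  rw [transfer_eq hA, ← mulVec_mulVec, ← mulVec_mulVec, hdiag, mulVec_smul, mulVec_mulVec, hUU,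
    one_mulVec]

theorem transfer_eq_smul_one_iff (hA : A.IsHermitian) (t : ℝ) (c : ℂ) :
    transfer A t = c • 1 ↔ ∀ j, cexp (-(I * t) * hA.eigenvalues j) = c := by
  set U : Matrix n n ℂ := (hA.eigenvectorUnitary : Matrix n n ℂ)
  have hUU : U * star U = 1 := Unitary.mul_star_self_of_mem (SetLike.coe_mem _)
  have hsUU : star U * U = 1 := Unitary.star_mul_self_of_mem (SetLike.coe_mem _)
  set D := diagonal (fun j => cexp (-(I * t) * hA.eigenvalues j))
  rw [← diagonal_eq_diagonal_iff, ← smul_one_eq_diagonal, transfer_eq hA]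
  constructor
  · intro h
    calc D = star U * (U * D * star U) * U := by
          simp only [← mul_assoc, hsUU, one_mul]; rw [mul_assoc, hsUU, mul_one]
      _ = c • 1 := by rw [h, Matrix.mul_smul, mul_one, Matrix.smul_mul, hsUU]
  · intro h
    rw [h, Matrix.mul_smul, mul_one, Matrix.smul_mul, hUU]

theorem hasPeriod_iff_transfer_eq_smul_one (hA : A.IsHermitian) (t : ℝ) {w : n → ℂ}
    (hw0 : ∀ v, w v ≠ 0) {l : ℝ} (hw : A *ᵥ w = (l : ℂ) • w) :
    HasPeriod A t ↔ transfer A t = cexp (-(I * t) * l) • 1 := by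
  constructor
  · intro h
    have hdiag : ∀ v, transfer A t v v = cexp (-(I * t) * l) := by
      intro v
      have := congrFun (transfer_mulVec_of_mulVec_eq hA t hw) v
      rw [mulVec, dotProduct, Finset.sum_eq_single v (fun u _ hu => by
        rw [apply_eq_zero_of_mul_star_eq_one (transfer_mul_star hA t) (h v) hu, zero_mul])
        (by simp), Pi.smul_apply, smul_eq_mul] at this
      exact mul_right_cancel₀ (hw0 v) this
    ext u v
    by_cases huv : u = v
    · subst huv; simp [hdiag]
    · simp [one_apply_ne huv,
        apply_eq_zero_of_mul_star_eq_one (transfer_mul_star hA t) (h u) (Ne.symm huv)]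
  · intro h v
    rw [h, smul_apply, one_apply_eq, smul_eq_mul, mul_one, norm_exp_neg_I_mul]

theorem hasPeriod_iff (hA : A.IsHermitian) (t : ℝ) {w : n → ℂ} (hw0 : ∀ v, w v ≠ 0) {l : ℝ}
    (hw : A *ᵥ w = (l : ℂ) • w) :
    HasPeriod A t ↔ ∀ j, ∃ k : ℤ, t * (hA.eigenvalues j - l) = 2 * π * k := by
  rw [hasPeriod_iff_transfer_eq_smul_one hA t hw0 hw, transfer_eq_smul_one_iff hA]
  exact forall_congr' fun j => exp_neg_I_mul_eq_iff t _ _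

theorem forall_mem_spectrum_iff (hA : A.IsHermitian) {P : ℂ → Prop} :
    (∀ μ ∈ spectrum ℂ A, P μ) ↔ ∀ j, P (hA.eigenvalues j) := by
  rw [hA.spectrum_eq_image_range]
  simp

theorem isIntegral_iff (hA : A.IsHermitian) :
    _root_.isIntegral A ↔ ∀ j, ∃ k : ℤ, hA.eigenvalues j = k := by
  rw [_root_.isIntegral, hA.forall_mem_spectrum_iff]
  exact_mod_cast Iff.rfl

theorem exists_int_eq_eigenvalue_of_eq_ratCast (hA : A.IsHermitian)
    (hZ : ∀ i j, ∃ k : ℤ, A i j = k) {j : n} {q : ℚ} (hq : hA.eigenvalues j = q) :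
    ∃ m : ℤ, hA.eigenvalues j = m := by
  have hmem : (hA.eigenvalues j : ℂ) ∈ spectrum ℂ A := by
    rw [hA.spectrum_eq_image_range]
    exact ⟨_, ⟨j, rfl⟩, rfl⟩
  obtain ⟨m, rfl⟩ := exists_int_eq_of_isIntegral_ratCast (q := q)
    (by simpa [hq] using isIntegral_of_mem_spectrum hZ hmem)
  exact ⟨m, by simp [hq]⟩

theorem exists_int_eq_eigenvalue_of_phases (hA : A.IsHermitian)
    (hZ : ∀ i j, ∃ k : ℤ, A i j = k) {l : ℤ} (htr : A.trace ≠ Fintype.card n * l) {t : ℝ}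
    (ht : t ≠ 0) (hper : ∀ j, ∃ k : ℤ, t * (hA.eigenvalues j - l) = 2 * π * k) (j : n) :
    ∃ m : ℤ, hA.eigenvalues j = m := by
  obtain ⟨T, hT⟩ : ∃ T : ℤ, A.trace = T := by
    choose d hd using fun i => hZ i i
    exact ⟨∑ i, d i, by simp [trace, hd]⟩
  have hsum : ∑ j, (hA.eigenvalues j - l) = ((T - Fintype.card n * l : ℤ) : ℚ) := by
    have htrace : ∑ j, hA.eigenvalues j = T := by
      apply Complex.ofReal_injective
      simpa using hA.trace_eq_sum_eigenvalues.symm.trans hT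
    rw [Finset.sum_sub_distrib, htrace, Finset.sum_const, Finset.card_univ, nsmul_eq_mul]
    push_cast
    ring
  have hT0 : ((T - Fintype.card n * l : ℤ) : ℚ) ≠ 0 := by
    rw [hT] at htr
    exact_mod_cast sub_ne_zero.mpr fun h => htr (by exact_mod_cast h)
  have hx : ∀ j, ∃ k : ℤ, hA.eigenvalues j - l = 2 * π / t * k := fun j => by
    obtain ⟨k, hk⟩ := hper j
    exact ⟨k, by field_simp; linarith⟩
  obtain ⟨q, hq⟩ := exists_rat_eq_of_forall_eq_mul_int hx hsum hT0 j
  exact hA.exists_int_eq_eigenvalue_of_eq_ratCast hZ (q := q + l) (by push_cast; linarith)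

end Matrix.IsHermitian

section SemiCayley

variable {G : Type*} [Group G]

theorem mul_inv_mem_comm [DecidableEq G] {T : Finset G} (hT : T⁻¹ = T) (a b : G) :
    a * b⁻¹ ∈ T ↔ b * a⁻¹ ∈ T := by
  nth_rw 1 [← hT]
  rw [Finset.mem_inv', _root_.mul_inv_rev, inv_inv]

theorem scAdj_isHermitian [DecidableEq G] {R L : Finset G} (S : Finset G) (hR : R⁻¹ = R)
    (hL : L⁻¹ = L) : (scAdj R L S).IsHermitian := by
  ext ⟨x, i⟩ ⟨y, j⟩
  fin_cases i <;> fin_cases j <;> simp [scAdj, mul_inv_mem_comm hR x y, mul_inv_mem_comm hL x y]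

theorem scAdj_apply_eq_intCast (R L S : Finset G) (u v : G × Fin 2) :
    ∃ k : ℤ, scAdj R L S u v = k := by
  unfold scAdj
  split_ifs
  exacts [⟨1, by simp⟩, ⟨1, by simp⟩, ⟨1, by simp⟩, ⟨1, by simp⟩, ⟨0, by simp⟩]

variable [Fintype G]

theorem trace_scAdj {R L : Finset G} (S : Finset G) (h1R : (1 : G) ∉ R) (h1L : (1 : G) ∉ L) :
    (scAdj R L S).trace = 0 := by
  refine Finset.sum_eq_zero fun ⟨x, i⟩ _ => ?_
  fin_cases i <;> simp [scAdj, h1R, h1L]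

theorem card_filter_mul_inv_mem (T : Finset G) (x : G) : #{y | y * x⁻¹ ∈ T} = #T := by
  rw [← card_map (Equiv.mulRight x⁻¹).toEmbedding]
  congr 1
  ext y
  simp

theorem card_filter_mul_inv_mem' (T : Finset G) (x : G) : #{y | x * y⁻¹ ∈ T} = #T := by
  rw [← card_inv T, ← card_filter_mul_inv_mem T⁻¹ x]
  congr 1
  ext y
  simp [Finset.mem_inv']

theorem scAdj_mulVec_one {R L : Finset G} (S : Finset G) (hRL : #L = #R) :
    scAdj R L S *ᵥ (fun _ => 1) = ((#R + #S : ℕ) : ℂ) • fun _ => 1 := by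
  ext ⟨x, i⟩
  simp only [mulVec, dotProduct, mul_one, Fintype.sum_prod_type, Fin.sum_univ_two]
  fin_cases i <;> simp [scAdj, Finset.sum_add_distrib, card_filter_mul_inv_mem,
    card_filter_mul_inv_mem', hRL, add_comm]

theorem exists_int_eq_eigenvalue_scAdj_of_phases {R S : Finset G}
    (hA : (scAdj R R S).IsHermitian) (h1R : (1 : G) ∉ R) {t : ℝ} (ht : t ≠ 0)
    (hper : ∀ j, ∃ k : ℤ, t * (hA.eigenvalues j - (#R + #S : ℤ)) = 2 * π * k) (j : G × Fin 2) :
    ∃ m : ℤ, hA.eigenvalues j = m := by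
  by_cases h0 : #R + #S = 0
  · have hzero : scAdj R R S = 0 := by
      obtain ⟨rfl, rfl⟩ : R = ∅ ∧ S = ∅ := by simpa using h0
      ext u v
      simp [scAdj]
    exact ⟨0, by simp [hA.eigenvalues_eq_zero_iff.mpr hzero]⟩
  · refine hA.exists_int_eq_eigenvalue_of_phases (scAdj_apply_eq_intCast R R S) ?_ ht hper j
    rw [trace_scAdj S h1R h1R, ne_comm]
    exact_mod_cast Nat.mul_ne_zero Fintype.card_ne_zero h0

end SemiCayley

/-- `SC(G,R,R,S)` is periodic iff it is integral, in which case the minimum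
period is `2π/M` where `M` is the gcd of the differences `λ - λ₁⁺` over the eigenvalues
`λ ≠ λ₁⁺ = |R| + |S|`. -/
theorem semiCayley_RR_periodic_iff_integral
    {G : Type*} [CommGroup G] [Fintype G] [DecidableEq G]
    (R S : Finset G) (hR : R⁻¹ = R) (h1R : (1 : G) ∉ R) :
    ((∃ t : ℝ, 0 < t ∧ ∀ u : G × Fin 2, ‖transfer (scAdj R R S) t u u‖ = 1) ↔
      isIntegral (scAdj R R S)) ∧
    (isIntegral (scAdj R R S) →
      ∀ M : ℤ,
        IsGreatest {d : ℤ | 0 < d ∧ ∀ μ ∈ spectrum ℂ (scAdj R R S),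
            ∃ k : ℤ, μ - ((R.card : ℂ) + (S.card : ℂ)) = (k : ℂ) * (d : ℂ)} M →
        IsLeast {t : ℝ | 0 < t ∧ ∀ u : G × Fin 2,
            ‖transfer (scAdj R R S) t u u‖ = 1}
          (2 * Real.pi / (M : ℝ))) := by
  have hA : (scAdj R R S).IsHermitian := scAdj_isHermitian S hR hR
  have hper (t : ℝ) : HasPeriod (scAdj R R S) t ↔
      ∀ j, ∃ k : ℤ, t * (hA.eigenvalues j - (#R + #S : ℤ)) = 2 * π * k := by
    refine hA.hasPeriod_iff t (fun _ => one_ne_zero) ?_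
    rw [scAdj_mulVec_one S rfl]
    push_cast
    rfl
  refine ⟨⟨fun ⟨t, ht, h⟩ => ?_, fun hint => ⟨2 * π, two_pi_pos, ?_⟩⟩, fun hint M hM => ?_⟩
  · exact hA.isIntegral_iff.2
      (exists_int_eq_eigenvalue_scAdj_of_phases hA h1R ht.ne' ((hper t).1 h))
  · refine (hper _).2 fun j => ?_
    obtain ⟨m, hm⟩ := hA.isIntegral_iff.1 hint j
    exact ⟨m - (#R + #S), by rw [hm]; push_cast; ring⟩
  · choose e he using hA.isIntegral_iff.1 hint
    have hM' : IsGreatest {d : ℤ | 0 < d ∧ ∀ j, d ∣ e j - (#R + #S)} M := by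
      convert hM using 4 with d
      rw [hA.forall_mem_spectrum_iff]
      refine forall_congr' fun j => ?_
      rw [dvd_iff_exists_eq_mul_left, he j]
      exact_mod_cast Iff.rfl
    convert isLeast_two_pi_div _ hM' using 3 with t
    rw [← HasPeriod, hper]
    refine and_congr_right' (forall_congr' fun j => ?_)
    rw [he j]
    exact_mod_cast Iff.rfl
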